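/- Define A ◇ B = (A − B)* − A* − B* for 3×3 matrices A, B, where * denotes adjugate. Then A ◇ B = (tr(AB) − tr(A)tr(B))·I + tr(B)·A + tr(A)·B − AB − BA. -/

import Mathlib

/-!
For a `3 × 3` matrix the Cayley–Hamilton theorem gives `A* = A² - tr(A)·A + σ₂(A)·I`, where
`σ₂(A)` is the coefficient of `X` in the characteristic polynomial. The quadratic form `σ₂`
polarizes as `σ₂(A - B) = σ₂(A) + σ₂(B) - tr(A)tr(B) + tr(AB)`, so in `(A - B)* - A* - B*`
the pure `A`- and `B`-terms cancel and only the mixed terms of the three summands survive.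
-/

open Matrix

namespace Matrix

variable {R : Type*} [CommRing R]

/-- The coefficient of `X` in the characteristic polynomial; it equals `(tr(A)² - tr(A²)) / 2`
when `2` is invertible. -/
def secondInvariant (A : Matrix (Fin 3) (Fin 3) R) : R :=
  A 0 0 * A 1 1 - A 0 1 * A 1 0 + A 0 0 * A 2 2 - A 0 2 * A 2 0 + A 1 1 * A 2 2 - A 1 2 * A 2 1

theorem adjugate_fin_three_eq_cayleyHamilton (A : Matrix (Fin 3) (Fin 3) R) :
    A.adjugate = A * A - A.trace • A + A.secondInvariant • (1 : Matrix (Fin 3) (Fin 3) R) := by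
  ext i j
  fin_cases i <;> fin_cases j <;>
    simp [adjugate_fin_three, trace_fin_three, secondInvariant, mul_apply, Fin.sum_univ_three] <;>
    ring

theorem secondInvariant_sub (A B : Matrix (Fin 3) (Fin 3) R) :
    (A - B).secondInvariant =
      A.secondInvariant + B.secondInvariant - A.trace * B.trace + (A * B).trace := by
  simp only [secondInvariant, trace_fin_three, mul_apply, Fin.sum_univ_three, sub_apply]
  ring

theorem adjugate_sub_sub_adjugate_sub_adjugate_fin_three (A B : Matrix (Fin 3) (Fin 3) R) :
    (A - B).adjugate - A.adjugate - B.adjugate =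
      ((A * B).trace - A.trace * B.trace) • (1 : Matrix (Fin 3) (Fin 3) R)
        + B.trace • A + A.trace • B - A * B - B * A := by
  simp only [adjugate_fin_three_eq_cayleyHamilton, secondInvariant_sub, trace_sub, sub_mul,
    mul_sub]
  module

end Matrix

/-- With `A ◇ B = (A − B)* − A* − B*`, we have
`A ◇ B = (tr(AB) − tr(A)tr(B))·I + tr(B)·A + tr(A)·B − AB − BA`. -/
theorem diamond_eq_trace_formula (A B : Matrix (Fin 3) (Fin 3) ℝ) :
    (A - B).adjugate - A.adjugate - B.adjugate =
      (Matrix.trace (A * B) - Matrix.trace A * Matrix.trace B) • (1 : Matrix (Fin 3) (Fin 3) ℝ)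
        + (Matrix.trace B) • A + (Matrix.trace A) • B - A * B - B * A :=
  adjugate_sub_sub_adjugate_sub_adjugate_fin_three A B
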